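/- Let 0 < α ≤ 1 and β > 0, and let μ be the gamma distribution with shape α and rate 1/β (density x ↦ x^{α-1} exp(-x/β)/(β^α Γ(α)) on (0, ∞)). Let 0 < δ < 1 and suppose η ≥ β satisfies μ{x : x ≥ η} = δ. Then η ≤ -β (log δ + log Γ(α)). -/

import Mathlib

/-!
For shape `α ≤ 1` the factor `x ^ (α - 1)` of the gamma density is nonincreasing, so on `[η, ∞)`
the density is dominated by a multiple of `exp (-x / β)`, whose tail integral is explicit:
`μ [η, ∞) ≤ (η / β) ^ (α - 1) * exp (-η / β) / Γ(α)`. When `η ≥ β` the power is at most `1`,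
hence `δ ≤ exp (-η / β) / Γ(α)`, and taking logarithms gives the bound.
-/

open MeasureTheory

open Real Set in
lemma lintegral_Ici_exp_neg_mul {r : ℝ} (hr : 0 < r) (t : ℝ) :
    ∫⁻ x in Ici t, ENNReal.ofReal (exp (-r * x)) = ENNReal.ofReal (exp (-r * t) / r) := by
  have hint : IntegrableOn (fun x ↦ exp (-r * x)) (Ici t) :=
    (integrableOn_Ici_iff_integrableOn_Ioi).2 (integrableOn_exp_mul_Ioi (neg_neg_of_pos hr) t)
  rw [← ofReal_integral_eq_lintegral_ofReal hint (ae_of_all _ fun x ↦ (exp_pos _).le),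
    integral_Ici_eq_integral_Ioi, integral_exp_mul_Ioi (neg_neg_of_pos hr), neg_div_neg_eq]

namespace ProbabilityTheory

open Real Set

variable {a r t : ℝ}

lemma gammaPDFReal_le_of_le (ha0 : 0 < a) (ha1 : a ≤ 1) (hr : 0 ≤ r) (ht : 0 < t) {x : ℝ}
    (hx : t ≤ x) : gammaPDFReal a r x ≤ r ^ a / Gamma a * t ^ (a - 1) * exp (-r * x) := by
  rw [gammaPDFReal, if_pos (ht.trans_le hx).le, neg_mul]
  have hpow : x ^ (a - 1) ≤ t ^ (a - 1) := rpow_le_rpow_of_nonpos ht hx (by linarith)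
  have hcoef : 0 ≤ r ^ a / Gamma a := div_nonneg (rpow_nonneg hr a) (Gamma_pos_of_pos ha0).le
  gcongr

lemma gammaMeasure_Ici_le (ha0 : 0 < a) (ha1 : a ≤ 1) (hr : 0 < r) (ht : 0 < t) :
    gammaMeasure a r (Ici t) ≤ ENNReal.ofReal ((r * t) ^ (a - 1) * exp (-r * t) / Gamma a) := by
  set C := r ^ a / Gamma a * t ^ (a - 1) with hC_def
  have hC : 0 ≤ C := by positivity
  calc gammaMeasure a r (Ici t)
      = ∫⁻ x in Ici t, ENNReal.ofReal (gammaPDFReal a r x) :=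
        withDensity_apply _ measurableSet_Ici
    _ ≤ ∫⁻ x in Ici t, ENNReal.ofReal C * ENNReal.ofReal (exp (-r * x)) := by
        refine setLIntegral_mono (by fun_prop) fun x hx ↦ ?_
        rw [← ENNReal.ofReal_mul hC]
        exact ENNReal.ofReal_le_ofReal (gammaPDFReal_le_of_le ha0 ha1 hr.le ht hx)
    _ = ENNReal.ofReal (C * (exp (-r * t) / r)) := by
        rw [lintegral_const_mul _ (by fun_prop), lintegral_Ici_exp_neg_mul hr,
          ENNReal.ofReal_mul hC]
    _ = ENNReal.ofReal ((r * t) ^ (a - 1) * exp (-r * t) / Gamma a) := by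
        rw [hC_def, mul_rpow hr.le ht.le, rpow_sub_one hr.ne']
        congr 1
        ring

end ProbabilityTheory

theorem gamma_threshold_upper_bound_general (α β δ η : ℝ) (hα0 : 0 < α) (hα1 : α ≤ 1)
    (hβ : 0 < β) (hδ0 : 0 < δ) (hη : β ≤ η)
    (h : ProbabilityTheory.gammaMeasure α (1 / β) {x : ℝ | η ≤ x} = ENNReal.ofReal δ) :
    η ≤ -β * (Real.log δ + Real.log (Real.Gamma α)) := by
  have hΓ : 0 < Real.Gamma α := Real.Gamma_pos_of_pos hα0
  have hη0 : 0 < η := hβ.trans_le hη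
  have hscaled : 1 ≤ 1 / β * η := by rw [one_div_mul_eq_div, one_le_div hβ]; exact hη
  have htail := h ▸ ProbabilityTheory.gammaMeasure_Ici_le hα0 hα1 (one_div_pos.2 hβ) hη0
  have hδ : δ ≤ Real.exp (-(1 / β) * η) / Real.Gamma α :=
    calc δ ≤ (1 / β * η) ^ (α - 1) * Real.exp (-(1 / β) * η) / Real.Gamma α :=
          (ENNReal.ofReal_le_ofReal_iff (by positivity)).1 htail
      _ ≤ Real.exp (-(1 / β) * η) / Real.Gamma α := by
          gcongr
          exact mul_le_of_le_one_left (Real.exp_pos _).le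
            (Real.rpow_le_one_of_one_le_of_nonpos hscaled (by linarith))
  have hlog := Real.log_le_log hδ0 hδ
  rw [Real.log_div (Real.exp_pos _).ne' hΓ.ne', Real.log_exp] at hlog
  calc η = β * (1 / β * η) := by field_simp
    _ ≤ -β * (Real.log δ + Real.log (Real.Gamma α)) := by nlinarith

/-- Corollary 1.2: for gamma-distributed absolute gradients with shape `0 < α ≤ 1` and rate
`1 / β`, if a threshold `η ≥ β` achieves compression ratio `δ` (i.e. `μ {x : x ≥ η} = δ`),
then `η ≤ -β * (log δ + log (Γ α))`. -/
theorem gamma_threshold_upper_bound (α β δ η : ℝ) (hα0 : 0 < α) (hα1 : α ≤ 1)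
    (hβ : 0 < β) (hδ0 : 0 < δ) (hδ1 : δ < 1) (hη : β ≤ η)
    (h : ProbabilityTheory.gammaMeasure α (1 / β) {x : ℝ | η ≤ x} = ENNReal.ofReal δ) :
    η ≤ -β * (Real.log δ + Real.log (Real.Gamma α)) :=
  gamma_threshold_upper_bound_general α β δ η hα0 hα1 hβ hδ0 hη h
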